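/- arXiv:1107.0127 — 2 statements merged into one kernel-verified Lean document; each statement's English description precedes it below -/
import Mathlib

section
/- The operator ∇̃_n raises the Krawtchouk index: for every r ∈ {0,...,n}, ∇̃_n φ_r = (1/(nt))·φ_{r+1}, with the convention φ_{n+1} = 0. -/
/-!
With `A = 1 + (1 - t) X` and `B = 1 - t X`, the generating function of `φ_·(k)` is the
polynomial `G_k = A ^ k * B ^ (n - k)`, so `φ_r(k)` is `r! / (1 - t) ^ r` times its `r`-th
coefficient. Since `t A + (1 - t) B = 1`, the derivative `G_k' = k (1 - t) A^(k-1) B^(n-k)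
- (n - k) t A^k B^(n-k-1)` equals the three-term combination
`k (1 - t)² G_{k-1} - (n - 2k) t (1 - t) G_k - (n - k) t² G_{k+1}`; comparing `r`-th
coefficients is the claimed identity, and `φ_{n+1} = 0` because `deg G_k ≤ n`.
-/

open Finset Polynomial

theorem Polynomial.coeff_eq_of_forall_sum_mul_pow_eq_eval {R : Type*} [CommRing R] [IsDomain R]
    [Infinite R] {N : ℕ} {a : ℕ → R} {p : R[X]}
    (h : ∀ w, ∑ i ∈ range N, a i * w ^ i = p.eval w) {r : ℕ} (hr : r < N) :
    a r = p.coeff r := by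
  have hp : ∑ i ∈ range N, C (a i) * X ^ i = p :=
    Polynomial.funext fun w => by simp [eval_finsetSum, h]
  simp [← hp, hr]

section Krawtchouk

variable (n : ℕ) (t : ℝ)

noncomputable def krawtchoukGen (k : ℕ) : ℝ[X] :=
  (1 + C (1 - t) * X) ^ k * (1 - C t * X) ^ (n - k)

noncomputable def krawtchouk (r k : ℕ) : ℝ :=
  r.factorial / (1 - t) ^ r * (krawtchoukGen n t k).coeff r

variable {n t}

theorem eval_krawtchoukGen (k : ℕ) (w : ℝ) :
    (krawtchoukGen n t k).eval w = (1 + (1 - t) * w) ^ k * (1 - t * w) ^ (n - k) := by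
  simp [krawtchoukGen]

theorem natDegree_krawtchoukGen_le {k : ℕ} (hk : k ≤ n) :
    (krawtchoukGen n t k).natDegree ≤ n := by
  unfold krawtchoukGen
  have hA : (1 + C (1 - t) * X : ℝ[X]).natDegree ≤ 1 := by compute_degree
  have hB : (1 - C t * X : ℝ[X]).natDegree ≤ 1 := by compute_degree
  calc _ ≤ k * 1 + (n - k) * 1 :=
        natDegree_mul_le_of_le (natDegree_pow_le_of_le k hA) (natDegree_pow_le_of_le _ hB)
    _ = n := by omega

theorem krawtchouk_succ_self {k : ℕ} (hk : k ≤ n) : krawtchouk n t (n + 1) k = 0 := by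
  simp [krawtchouk,
    coeff_eq_zero_of_natDegree_lt (Nat.lt_succ_of_le (natDegree_krawtchoukGen_le hk))]

theorem derivative_krawtchoukGen (k : ℕ) :
    derivative (krawtchoukGen n t k) =
      C (1 - t) * (C (k : ℝ) * (1 + C (1 - t) * X) ^ (k - 1) * (1 - C t * X) ^ (n - k))
        - C t * (C ((n - k : ℕ) : ℝ) * (1 + C (1 - t) * X) ^ k
          * (1 - C t * X) ^ (n - k - 1)) := by
  simp only [krawtchoukGen, derivative_mul, derivative_pow, derivative_add, derivative_sub,
    derivative_one, derivative_X, derivative_C]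
  ring

-- At `k = 0` and `k = n` the indices `k - 1` and `n - (k + 1)` truncate, harmlessly: the
-- corresponding coefficients vanish.
theorem krawtchoukGen_three_term {k : ℕ} (hk : k ≤ n) :
    C (k * (1 - t) ^ 2) * krawtchoukGen n t (k - 1)
      - C ((n - 2 * k) * (t * (1 - t))) * krawtchoukGen n t k
      - C ((n - k) * t ^ 2) * krawtchoukGen n t (k + 1) = derivative (krawtchoukGen n t k) := by
  rw [derivative_krawtchoukGen]
  set A : ℝ[X] := 1 + C (1 - t) * X
  set B : ℝ[X] := 1 - C t * X
  set P := C (k : ℝ) * A ^ (k - 1) * B ^ (n - k)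
  set Q := C ((n - k : ℕ) : ℝ) * A ^ k * B ^ (n - k - 1)
  have hAB : C t * A + C (1 - t) * B = 1 := by
    simp only [A, B, map_sub, map_one]; ring
  have h₁ : C (k : ℝ) * krawtchoukGen n t (k - 1) = P * B := by
    rcases k with _ | j
    · simp [P]
    · simp only [krawtchoukGen, P, Nat.add_sub_cancel, show n - j = n - (j + 1) + 1 by omega]
      ring
  have h₂ : C (k : ℝ) * krawtchoukGen n t k = P * A := by
    rcases k with _ | j
    · simp [P]
    · simp only [krawtchoukGen, P, Nat.add_sub_cancel]; ring
  have h₃ : C ((n - k : ℕ) : ℝ) * krawtchoukGen n t k = Q * B := by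
    rcases h : n - k with _ | j
    · simp [Q, h]
    · simp only [krawtchoukGen, Q, h, Nat.add_sub_cancel]; ring
  have h₄ : C ((n - k : ℕ) : ℝ) * krawtchoukGen n t (k + 1) = Q * A := by
    rcases h : n - k with _ | j
    · simp [Q, h]
    · simp only [krawtchoukGen, Q, h, Nat.add_sub_cancel, show n - (k + 1) = j by omega]
      ring
  clear_value P Q A B
  simp only [Nat.cast_sub hk, map_sub, map_mul, map_pow, map_natCast, map_one, map_ofNat] at *
  linear_combination (1 - C t) ^ 2 * h₁ + C t * (1 - C t) * h₂ - C t * (1 - C t) * h₃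
    - C t ^ 2 * h₄ + ((1 - C t) * P - C t * Q) * hAB

theorem krawtchouk_three_term (ht₀ : t ≠ 0) (ht₁ : 1 - t ≠ 0) {k : ℕ} (hk : k ≤ n)
    (r : ℕ) :
    k * ((1 - t) / t) * krawtchouk n t r (k - 1) - (n - 2 * k) * krawtchouk n t r k
      - (n - k) * (t / (1 - t)) * krawtchouk n t r (k + 1) = krawtchouk n t (r + 1) k / t := by
  have h := congrArg (coeff · r) (krawtchoukGen_three_term (t := t) hk)
  simp only [coeff_sub, coeff_C_mul, coeff_derivative] at h
  simp only [krawtchouk, Nat.factorial_succ, Nat.cast_mul, Nat.cast_succ]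
  field_simp
  linear_combination (1 - t) ^ (r + 1) * h

theorem eq_krawtchouk_of_sum_eq {φ : ℕ → ℕ → ℝ} (ht₁ : 1 - t ≠ 0)
    (hφ : ∀ k ≤ n, ∀ w : ℝ,
      ∑ r ∈ range (n + 1), (1 - t) ^ r / (r.factorial : ℝ) * φ r k * w ^ r
        = (1 + (1 - t) * w) ^ k * (1 - t * w) ^ (n - k))
    {r k : ℕ} (hr : r ≤ n) (hk : k ≤ n) : φ r k = krawtchouk n t r k := by
  have h := coeff_eq_of_forall_sum_mul_pow_eq_eval (p := krawtchoukGen n t k)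
    (fun w => by rw [hφ k hk w, eval_krawtchoukGen]) (Nat.lt_succ_of_le hr)
  rw [krawtchouk, ← h]
  field_simp

end Krawtchouk

theorem stmt13_general (n : ℕ) (t : ℝ) (ht : t ∈ Set.Ioo (0 : ℝ) 1)
    (φ : ℕ → ℕ → ℝ)
    (hφ : ∀ k ≤ n, ∀ w : ℝ,
      ∑ r ∈ range (n + 1), (1 - t) ^ r / (Nat.factorial r : ℝ) * φ r k * w ^ r
        = (1 + (1 - t) * w) ^ k * (1 - t * w) ^ (n - k))
    (r : ℕ) (hr : r ≤ n) (k : ℕ) (hk : k ≤ n) :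
    (k : ℝ) / n * ((1 - t) / t) * φ r (k - 1) - ((n : ℝ) - 2 * k) / n * φ r k
        - ((n : ℝ) - k) / n * (t / (1 - t)) * φ r (k + 1)
      = 1 / ((n : ℝ) * t) * (if r = n then 0 else φ (r + 1) k) := by
  have ht₀ : t ≠ 0 := ht.1.ne'
  have ht₁ : 1 - t ≠ 0 := sub_ne_zero.2 ht.2.ne'
  have hφ' {r k : ℕ} (hr : r ≤ n) (hk : k ≤ n) := eq_krawtchouk_of_sum_eq ht₁ hφ hr hk
  -- at `k = n` the value `φ r (n + 1)` is unconstrained, but its coefficient vanishes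
  have h_succ : ((n : ℝ) - k) * φ r (k + 1) = (n - k) * krawtchouk n t r (k + 1) := by
    rcases hk.lt_or_eq with hlt | rfl
    · rw [hφ' hr hlt]
    · simp
  have h_rhs : (if r = n then 0 else φ (r + 1) k) = krawtchouk n t (r + 1) k := by
    split_ifs with hrn
    · rw [hrn, krawtchouk_succ_self hk]
    · exact hφ' (by omega) hk
  rw [hφ' hr (by omega : k - 1 ≤ n), hφ' hr hk, h_rhs]
  linear_combination (1 / (n : ℝ)) * krawtchouk_three_term ht₀ ht₁ hk r
    - t / (1 - t) / n * h_succ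

/-- `∇̃_n` raises the Krawtchouk index: `∇̃_n φ_r = (1/(nt))·φ_{r+1}`
(with `φ_{n+1} = 0`; at `k = 0` resp. `k = n` the coefficients of `φ_r(k-1)` resp.
`φ_r(k+1)` vanish, so the boundary conventions are immaterial). -/
theorem stmt13 (n : ℕ) (hn : 1 ≤ n) (t : ℝ) (ht : t ∈ Set.Ioo (0 : ℝ) 1)
    (φ : ℕ → ℕ → ℝ)
    (hφ : ∀ k ≤ n, ∀ w : ℝ,
      ∑ r ∈ range (n + 1), (1 - t) ^ r / (Nat.factorial r : ℝ) * φ r k * w ^ r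
        = (1 + (1 - t) * w) ^ k * (1 - t * w) ^ (n - k))
    (r : ℕ) (hr : r ≤ n) (k : ℕ) (hk : k ≤ n) :
    (k : ℝ) / n * ((1 - t) / t) * φ r (k - 1) - ((n : ℝ) - 2 * k) / n * φ r k
        - ((n : ℝ) - k) / n * (t / (1 - t)) * φ r (k + 1)
      = 1 / ((n : ℝ) * t) * (if r = n then 0 else φ (r + 1) k) :=
  stmt13_general n t ht φ hφ r hr k hk
end

section
/- Binomial Poincaré inequality: fix t ∈ (0,1) and let f : {0,...,n} → ℝ satisfy ∑_{k=0}^n f(k)·b_{n,t}(k) = 0. Then ∑_{k=0}^n b_{n,t}(k)·f(k)² ≤ n·t·(1-t)·∑_{k=0}^n b_{n,t}(k)·(∇_n f(k))², where f is extended by f(-1)=f(n+1)=0 (these values are unused since the coefficients vanish). -/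
/-!
Induction on `n`, viewing `Bin(n + 1, t)` as `Bin(n, t)` plus an independent Bernoulli(`t`) step
`ξ`. Conditioning on the first `n` steps splits the variance as
`Var_{n+1} f = t(1-t) E_n[(Δf)²] + Var_n(Pf)` with `Pf(k) = E f(k + ξ)`, and the induction
hypothesis bounds `Var_n(Pf)` by `n t(1-t) E_n[(∇_n Pf)²]`. Jensen gives
`E_n[(∇_n g)²] ≤ E_{n-1}[(Δg)²]`, while the absorption identities
`k b_{n+1}(k) = (n+1) t b_n(k-1)` and `(n+1-k) b_{n+1}(k) = (n+1)(1-t) b_n(k)` give the exact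
identity `(n+1) E_{n+1}[(∇_{n+1} f)²] = E_n[(Δf)²] + n E_{n-1}[(PΔf)²]`; since `ΔP = PΔ`,
the two combine to close the induction.
-/

open Finset

/-- The binomial mass function `b_{n,t}` on `ℤ`, supported on `{0,...,n}`. -/
noncomputable def binom (n : ℕ) (t : ℝ) (k : ℤ) : ℝ :=
  if 0 ≤ k ∧ k ≤ (n : ℤ) then (n.choose k.toNat : ℝ) * t ^ k.toNat * (1 - t) ^ (n - k.toNat)
  else 0

open fwdDiff

section Binom

variable {n : ℕ} {t : ℝ}

theorem binom_of_notMem_Icc {k : ℤ} (hk : k ∉ Icc (0 : ℤ) n) : binom n t k = 0 := by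
  rw [mem_Icc] at hk
  exact if_neg hk

theorem binom_natCast (n j : ℕ) (t : ℝ) :
    binom n t j = n.choose j * t ^ j * (1 - t) ^ (n - j) := by
  by_cases hj : j ≤ n
  · rw [binom, if_pos ⟨by omega, by omega⟩, Int.toNat_natCast]
  · rw [binom_of_notMem_Icc (by simp; omega), Nat.choose_eq_zero_of_lt (by omega)]
    simp

theorem binom_nonneg (ht0 : 0 ≤ t) (ht1 : t ≤ 1) (k : ℤ) : 0 ≤ binom n t k := by
  unfold binom
  split_ifs
  · have : 0 ≤ 1 - t := by linarith
    positivity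
  · exact le_rfl

theorem intCast_mul_binom_succ (n : ℕ) (t : ℝ) (k : ℤ) :
    (k : ℝ) * binom (n + 1) t k = (n + 1) * t * binom n t (k - 1) := by
  rcases lt_or_ge k 1 with hk | hk
  · rw [binom_of_notMem_Icc (k := k - 1) (by simp; omega)]
    rcases (by omega : k = 0 ∨ k < 0) with rfl | hk
    · simp
    · rw [binom_of_notMem_Icc (by simp; omega)]; simp
  obtain ⟨j, rfl⟩ : ∃ j : ℕ, k = ((j + 1 : ℕ) : ℤ) := ⟨(k - 1).toNat, by omega⟩
  rw [show ((j + 1 : ℕ) : ℤ) - 1 = j by push_cast; ring, binom_natCast, binom_natCast,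
    Nat.add_sub_add_right]
  have hchoose : ((j : ℝ) + 1) * (n + 1).choose (j + 1) = (n + 1) * n.choose j := by
    have := Nat.add_one_mul_choose_eq n j
    rw [mul_comm _ (j + 1)] at this
    exact_mod_cast this.symm
  push_cast
  linear_combination t ^ (j + 1) * (1 - t) ^ (n - j) * hchoose

theorem sub_mul_binom_succ (n : ℕ) (t : ℝ) (k : ℤ) :
    ((n : ℝ) + 1 - k) * binom (n + 1) t k = (n + 1) * (1 - t) * binom n t k := by
  rcases lt_or_ge k 0 with hk | hk
  · rw [binom_of_notMem_Icc (by simp; omega), binom_of_notMem_Icc (by simp; omega)]; simp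
  obtain ⟨j, rfl⟩ : ∃ j : ℕ, k = j := ⟨k.toNat, by omega⟩
  rw [binom_natCast, binom_natCast]
  rcases le_or_gt j n with hj | hj
  · have hchoose : ((n : ℝ) + 1 - j) * (n + 1).choose j = (n + 1) * n.choose j := by
      have hsub : ((n + 1 - j : ℕ) : ℝ) = n + 1 - j := by
        rw [Nat.cast_sub (by omega)]; push_cast; ring
      have := congrArg (fun x : ℕ => (x : ℝ)) (Nat.choose_mul_succ_eq n j)
      simp only [Nat.cast_mul, hsub, Nat.cast_add, Nat.cast_one] at this
      linear_combination -this
    rw [Nat.succ_sub hj, pow_succ]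
    linear_combination t ^ j * (1 - t) ^ (n - j) * (1 - t) * hchoose
  · rcases eq_or_lt_of_le (Nat.succ_le_of_lt hj) with rfl | hj'
    · push_cast; simp
    · rw [Nat.choose_eq_zero_of_lt hj, Nat.choose_eq_zero_of_lt hj']; simp

theorem binom_succ (n : ℕ) (t : ℝ) (k : ℤ) :
    binom (n + 1) t k = (1 - t) * binom n t k + t * binom n t (k - 1) := by
  have hn : (n : ℝ) + 1 ≠ 0 := by positivity
  apply mul_left_cancel₀ hn
  linear_combination intCast_mul_binom_succ n t k + sub_mul_binom_succ n t k

end Binom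

noncomputable def binomMean (n : ℕ) (t : ℝ) (u : ℤ → ℝ) : ℝ :=
  ∑ k ∈ Icc (0 : ℤ) n, binom n t k * u k

noncomputable def binomVar (n : ℕ) (t : ℝ) (u : ℤ → ℝ) : ℝ :=
  binomMean n t (fun k => u k ^ 2) - binomMean n t u ^ 2

-- `E u(k + ξ)` for `ξ ∼ Bernoulli(t)`.
def bernoulliAvg (t : ℝ) (u : ℤ → ℝ) (k : ℤ) : ℝ := (1 - t) * u k + t * u (k + 1)

section BinomMean

variable {n : ℕ} {t : ℝ}

theorem sum_Icc_binom_sub_mul {lo hi c : ℤ} (hlo : lo ≤ c) (hhi : n + c ≤ hi) (w : ℤ → ℝ) :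
    ∑ k ∈ Icc lo hi, binom n t (k - c) * w k = binomMean n t (fun k => w (k + c)) := by
  rw [← sub_add_cancel lo c, ← sub_add_cancel hi c, ← map_add_right_Icc, sum_map]
  simp only [addRightEmbedding_apply, add_sub_cancel_right]
  refine (sum_subset (Icc_subset_Icc (by omega) (by omega)) fun k _ hk => ?_).symm
  rw [binom_of_notMem_Icc hk, zero_mul]

theorem binomMean_zero (t : ℝ) (u : ℤ → ℝ) : binomMean 0 t u = u 0 := by
  simp [binomMean, binom]

theorem binomMean_add (u v : ℤ → ℝ) :
    binomMean n t (fun k => u k + v k) = binomMean n t u + binomMean n t v := by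
  simp only [binomMean, mul_add, sum_add_distrib]

theorem binomMean_const_mul (c : ℝ) (u : ℤ → ℝ) :
    binomMean n t (fun k => c * u k) = c * binomMean n t u := by
  simp only [binomMean, mul_sum]
  exact sum_congr rfl fun _ _ => by ring

theorem binomMean_mono (ht0 : 0 ≤ t) (ht1 : t ≤ 1) {u v : ℤ → ℝ}
    (h : ∀ k ∈ Icc (0 : ℤ) n, u k ≤ v k) : binomMean n t u ≤ binomMean n t v :=
  sum_le_sum fun k hk => mul_le_mul_of_nonneg_left (h k hk) (binom_nonneg ht0 ht1 k)

theorem binomMean_succ (u : ℤ → ℝ) :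
    binomMean (n + 1) t u = binomMean n t (bernoulliAvg t u) := by
  have hsplit : binomMean (n + 1) t u
      = (1 - t) * ∑ k ∈ Icc (0 : ℤ) (n + 1), binom n t (k - 0) * u k
        + t * ∑ k ∈ Icc (0 : ℤ) (n + 1), binom n t (k - 1) * u k := by
    simp only [binomMean, mul_sum, ← sum_add_distrib, sub_zero, Nat.cast_succ]
    exact sum_congr rfl fun k _ => by rw [binom_succ]; ring
  rw [hsplit, sum_Icc_binom_sub_mul le_rfl (by omega), sum_Icc_binom_sub_mul (by omega) le_rfl,
    ← binomMean_const_mul, ← binomMean_const_mul, ← binomMean_add]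
  simp only [add_zero]
  rfl

theorem binomMean_absorb (A B : ℤ → ℝ) :
    binomMean (n + 1) t (fun k => k * A k + ((n : ℝ) + 1 - k) * B k)
      = (n + 1) * binomMean n t (fun k => t * A (k + 1) + (1 - t) * B k) := by
  have hsplit : binomMean (n + 1) t (fun k => k * A k + ((n : ℝ) + 1 - k) * B k)
      = (n + 1) * (t * ∑ k ∈ Icc (0 : ℤ) (n + 1), binom n t (k - 1) * A k
        + (1 - t) * ∑ k ∈ Icc (0 : ℤ) (n + 1), binom n t (k - 0) * B k) := by
    simp only [binomMean, mul_sum, ← sum_add_distrib, sub_zero, Nat.cast_succ]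
    refine sum_congr rfl fun k _ => ?_
    linear_combination A k * intCast_mul_binom_succ n t k + B k * sub_mul_binom_succ n t k
  rw [hsplit, sum_Icc_binom_sub_mul (by omega) le_rfl, sum_Icc_binom_sub_mul le_rfl (by omega),
    ← binomMean_const_mul, ← binomMean_const_mul, ← binomMean_add]
  simp only [add_zero]

end BinomMean

-- `∇_n`; for `n = 0` division by zero makes it vanish.
noncomputable def nabla (n : ℕ) (f : ℤ → ℝ) (k : ℤ) : ℝ :=
  (k : ℝ) / n * (f k - f (k - 1)) + ((n : ℝ) - k) / n * (f (k + 1) - f k)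

theorem nabla_eq_div (n : ℕ) (f : ℤ → ℝ) (k : ℤ) :
    nabla n f k = (k * Δ_[1] f (k - 1) + ((n : ℝ) - k) * Δ_[1] f k) / n := by
  simp only [nabla, fwdDiff, sub_add_cancel]
  ring

theorem sq_add_le_mul_add {a b : ℝ} (ha : 0 ≤ a) (hb : 0 ≤ b) (x y : ℝ) :
    (a * x + b * y) ^ 2 ≤ (a + b) * (a * x ^ 2 + b * y ^ 2) := by
  nlinarith [mul_nonneg (mul_nonneg ha hb) (sq_nonneg (x - y))]

section Poincare

variable {n : ℕ} {t : ℝ}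

theorem binomVar_succ (u : ℤ → ℝ) :
    binomVar (n + 1) t u
      = t * (1 - t) * binomMean n t (fun k => Δ_[1] u k ^ 2) + binomVar n t (bernoulliAvg t u) := by
  have hsq : bernoulliAvg t (fun k => u k ^ 2)
      = fun k => t * (1 - t) * Δ_[1] u k ^ 2 + bernoulliAvg t u k ^ 2 := by
    funext k
    simp only [bernoulliAvg, fwdDiff]
    ring
  rw [binomVar, binomVar, binomMean_succ, binomMean_succ, hsq, binomMean_add, binomMean_const_mul]
  ring

theorem binomMean_sq_nabla_succ_le (ht0 : 0 ≤ t) (ht1 : t ≤ 1) (f : ℤ → ℝ) :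
    binomMean (n + 1) t (fun k => nabla (n + 1) f k ^ 2)
      ≤ binomMean n t (fun k => Δ_[1] f k ^ 2) := by
  set u := Δ_[1] f
  have hN : (0 : ℝ) < n + 1 := by positivity
  have hjensen : ∀ k ∈ Icc (0 : ℤ) ((n + 1 : ℕ) : ℤ), nabla (n + 1) f k ^ 2
      ≤ ((n : ℝ) + 1)⁻¹ * (k * u (k - 1) ^ 2 + ((n : ℝ) + 1 - k) * u k ^ 2) := by
    intro k hk
    rw [mem_Icc] at hk
    have hk0 : (0 : ℝ) ≤ k := by exact_mod_cast hk.1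
    have hk1 : (0 : ℝ) ≤ n + 1 - k := by
      rw [sub_nonneg]; exact_mod_cast hk.2
    have hCS := sq_add_le_mul_add hk0 hk1 (u (k - 1)) (u k)
    rw [add_sub_cancel] at hCS
    rw [nabla_eq_div, div_pow, div_le_iff₀ (by positivity)]
    push_cast
    calc _ ≤ _ := hCS
      _ = _ := by field_simp
  calc _ ≤ _ := binomMean_mono ht0 ht1 hjensen
    _ = binomMean n t (fun k => u k ^ 2) := by
      rw [binomMean_const_mul, binomMean_absorb, inv_mul_cancel_left₀ hN.ne']
      congr 1
      funext k
      rw [add_sub_cancel_right]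
      ring

theorem natCast_mul_binomMean_sq_nabla (f : ℤ → ℝ) :
    ((n : ℝ) + 2) * binomMean (n + 2) t (fun k => nabla (n + 2) f k ^ 2)
      = binomMean (n + 1) t (fun k => Δ_[1] f k ^ 2)
        + (n + 1) * binomMean n t (fun k => bernoulliAvg t (Δ_[1] f) k ^ 2) := by
  set u := Δ_[1] f
  set v := bernoulliAvg t u
  set w : ℤ → ℝ := fun k => k * u (k - 1) + ((n : ℝ) + 2 - k) * u k
  have hnabla : binomMean (n + 1 + 1) t (fun k => nabla (n + 2) f k ^ 2)
      = (((n : ℝ) + 2) ^ 2)⁻¹ * binomMean (n + 1 + 1) t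
          (fun k => k * (u (k - 1) * w k) + (((n + 1 : ℕ) : ℝ) + 1 - k) * (u k * w k)) := by
    rw [← binomMean_const_mul]
    congr 1
    funext k
    rw [nabla_eq_div]
    push_cast
    field_simp
    ring
  have hmid : (fun k => t * (u (k + 1 - 1) * w (k + 1)) + (1 - t) * (u k * w k))
      = fun k => u k ^ 2 + (k * (u k * v (k - 1)) + ((n : ℝ) + 1 - k) * (u k * v k)) := by
    funext k
    simp only [w, v, bernoulliAvg, sub_add_cancel, add_sub_cancel_right]
    push_cast
    ring
  have hlast : (fun k => t * (u (k + 1) * v (k + 1 - 1)) + (1 - t) * (u k * v k))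
      = fun k => v k ^ 2 := by
    funext k
    simp only [v, bernoulliAvg, add_sub_cancel_right]
    ring
  rw [hnabla, binomMean_absorb, hmid, binomMean_add, binomMean_absorb, hlast]
  field_simp
  push_cast
  ring

theorem binomMean_sq_fwdDiff_add_le (ht0 : 0 ≤ t) (ht1 : t ≤ 1) (f : ℤ → ℝ) :
    binomMean n t (fun k => Δ_[1] f k ^ 2)
        + n * binomMean n t (fun k => nabla n (bernoulliAvg t f) k ^ 2)
      ≤ (n + 1) * binomMean (n + 1) t (fun k => nabla (n + 1) f k ^ 2) := by
  cases n with
  | zero =>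
    refine le_of_eq ?_
    norm_num [binomMean_succ, binomMean_zero, nabla, bernoulliAvg, fwdDiff]
    ring
  | succ m =>
    have hcomm : Δ_[1] (bernoulliAvg t f) = bernoulliAvg t (Δ_[1] f) := by
      funext k
      simp only [fwdDiff, bernoulliAvg]
      ring
    have hle := binomMean_sq_nabla_succ_le ht0 ht1 (n := m) (bernoulliAvg t f)
    rw [hcomm] at hle
    have hid := natCast_mul_binomMean_sq_nabla (n := m) (t := t) f
    push_cast
    linear_combination ((m : ℝ) + 1) * hle - hid

theorem binomVar_le_mul_binomMean_sq_nabla (ht0 : 0 ≤ t) (ht1 : t ≤ 1) (n : ℕ) (f : ℤ → ℝ) :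
    binomVar n t f ≤ n * t * (1 - t) * binomMean n t (fun k => nabla n f k ^ 2) := by
  induction n generalizing f with
  | zero => simp [binomVar, binomMean_zero]
  | succ n ih =>
    have htt : 0 ≤ t * (1 - t) := mul_nonneg ht0 (sub_nonneg.mpr ht1)
    calc binomVar (n + 1) t f
        = t * (1 - t) * binomMean n t (fun k => Δ_[1] f k ^ 2)
          + binomVar n t (bernoulliAvg t f) := binomVar_succ f
      _ ≤ t * (1 - t) * (binomMean n t (fun k => Δ_[1] f k ^ 2)
          + n * binomMean n t (fun k => nabla n (bernoulliAvg t f) k ^ 2)) := by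
        linear_combination ih (bernoulliAvg t f)
      _ ≤ t * (1 - t) * ((n + 1) * binomMean (n + 1) t (fun k => nabla (n + 1) f k ^ 2)) :=
        mul_le_mul_of_nonneg_left (binomMean_sq_fwdDiff_add_le ht0 ht1 f) htt
      _ = _ := by
        push_cast
        ring

end Poincare

theorem stmt15_general (n : ℕ) (t : ℝ) (ht : t ∈ Set.Ioo (0 : ℝ) 1) (f : ℤ → ℝ)
    (hmean : ∑ k ∈ Icc (0 : ℤ) (n : ℤ), f k * binom n t k = 0) :
    ∑ k ∈ Icc (0 : ℤ) (n : ℤ), binom n t k * f k ^ 2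
      ≤ (n : ℝ) * t * (1 - t) * ∑ k ∈ Icc (0 : ℤ) (n : ℤ),
          binom n t k *
            ((k : ℝ) / n * (f k - f (k - 1)) + ((n : ℝ) - k) / n * (f (k + 1) - f k)) ^ 2 := by
  have hf : binomMean n t f = 0 := by
    rw [← hmean]
    exact sum_congr rfl fun k _ => mul_comm _ _
  have hvar := binomVar_le_mul_binomMean_sq_nabla ht.1.le ht.2.le n f
  rw [binomVar, hf, zero_pow two_ne_zero, sub_zero] at hvar
  exact hvar

/-- the binomial Poincaré inequality with the derivative `∇_n`.
The values `f(-1)` and `f(n+1)` appear only with vanishing coefficients. -/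
theorem stmt15 (n : ℕ) (hn : 1 ≤ n) (t : ℝ) (ht : t ∈ Set.Ioo (0 : ℝ) 1) (f : ℤ → ℝ)
    (hmean : ∑ k ∈ Icc (0 : ℤ) (n : ℤ), f k * binom n t k = 0) :
    ∑ k ∈ Icc (0 : ℤ) (n : ℤ), binom n t k * f k ^ 2
      ≤ (n : ℝ) * t * (1 - t) * ∑ k ∈ Icc (0 : ℤ) (n : ℤ),
          binom n t k *
            ((k : ℝ) / n * (f k - f (k - 1)) + ((n : ℝ) - k) / n * (f (k + 1) - f k)) ^ 2 :=
  stmt15_general n t ht f hmean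
end
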